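/- Let Q_{1,n}(t;w) = ∑_{i=1}^{n-1} W_{n,i}/(L_n + w + t·w·W_{n,i}) with L_n = ∑_{i=1}^{n-1} W_{n,i}, under the truncated BFRY setup. Then for fixed w > 0 and t ∈ [0,1], Q_{1,n}(t;w) → 1 in probability as n → ∞. -/

import Mathlib

/-!
On the event that every `W n i` lies in `(0, C n]`, the sum `L = ∑ j, W n j` satisfies
`L / (L + w (1 + t C n)) ≤ Q₁ ≤ 1`, so `ε ≤ |Q₁ - 1|` forces `L ≤ w (1 + t C n) / ε = O(C n)`.
A Chernoff bound at `s = (C n)⁻¹` gives `P(L ≤ a) ≤ exp (a / C n) * ∏ i, E[exp (-W n i / C n)]`.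
The truncated BFRY law puts mass at least `κ (C n) ^ (-α)` on `[C n / 2, C n]`, so each factor is
at most `exp (-c (C n) ^ (-α))`, and the probability is `O(exp (-c (n - 1) (C n) ^ (-α)))`, which
tends to `0` because `(C n) ^ α / n → 0`.
-/

open MeasureTheory ProbabilityTheory Real Set Filter Finset

/-- The truncated BFRY distribution on `(0, Cn]` with discount parameter `α`. -/
noncomputable def truncBFRY (α Cn : ℝ) : Measure ℝ :=
  volume.withDensity (fun w => ENNReal.ofReal
    (Set.indicator (Ioc (0:ℝ) Cn)
      (fun w => (∫ u in Ioc (0:ℝ) Cn, u ^ (-α - 1) * (1 - Real.exp (-u)))⁻¹ *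
        w ^ (-α - 1) * (1 - Real.exp (-w))) w))

noncomputable def Q₁ {ι : Type*} [Fintype ι] (w t : ℝ) (v : ι → ℝ) : ℝ :=
  ∑ i, v i / ((∑ j, v j) + w + t * w * v i)

section Q₁

variable {ι : Type*} [Fintype ι] {v : ι → ℝ} {w t C ε : ℝ}

lemma Q₁_le_one (hw : 0 < w) (ht : 0 ≤ t) (hv : ∀ i, 0 ≤ v i) : Q₁ w t v ≤ 1 := by
  have hL : 0 ≤ ∑ j, v j := Finset.sum_nonneg fun j _ => hv j
  calc Q₁ w t v ≤ ∑ i, v i / ((∑ j, v j) + w) :=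
        Finset.sum_le_sum fun i _ => div_le_div_of_nonneg_left (hv i) (by positivity)
          (by have := mul_nonneg (mul_nonneg ht hw.le) (hv i); linarith)
    _ = (∑ j, v j) / ((∑ j, v j) + w) := by rw [Finset.sum_div]
    _ ≤ 1 := div_le_one_of_le₀ (by linarith) (by positivity)

lemma div_le_Q₁ (hw : 0 < w) (ht : 0 ≤ t) (hv : ∀ i, v i ∈ Icc 0 C) :
    (∑ j, v j) / ((∑ j, v j) + w + t * w * C) ≤ Q₁ w t v := by
  have hL : 0 ≤ ∑ j, v j := Finset.sum_nonneg fun j _ => (hv j).1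
  rw [Finset.sum_div]
  refine Finset.sum_le_sum fun i _ => div_le_div_of_nonneg_left (hv i).1 ?_ ?_
  · have := (hv i).1; positivity
  · have := mul_le_mul_of_nonneg_left (hv i).2 (mul_nonneg ht hw.le); linarith

lemma sum_le_of_le_abs_Q₁_sub_one (hw : 0 < w) (ht : 0 ≤ t) (hC : 0 ≤ C)
    (hv : ∀ i, v i ∈ Icc 0 C) (hε : 0 < ε) (h : ε ≤ |Q₁ w t v - 1|) :
    ∑ j, v j ≤ w * (1 + t * C) / ε := by
  set L := ∑ j, v j
  have hL : 0 ≤ L := Finset.sum_nonneg fun j _ => (hv j).1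
  have hD : 0 < w * (1 + t * C) := by positivity
  rw [abs_of_nonpos (sub_nonpos.2 (Q₁_le_one hw ht fun i => (hv i).1))] at h
  have hlow := div_le_Q₁ hw ht hv
  have hgap : ε * (L + w * (1 + t * C)) ≤ w * (1 + t * C) := by
    rw [← le_div_iff₀ (by positivity)]
    calc ε ≤ 1 - L / (L + w + t * w * C) := by linarith
      _ = w * (1 + t * C) / (L + w * (1 + t * C)) := by field_simp; ring
  rw [le_div_iff₀ hε]
  nlinarith

end Q₁

section Chernoff

variable {Ω : Type*} [MeasurableSpace Ω] {μ : Measure Ω} [IsProbabilityMeasure μ]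

lemma integrable_exp_neg_mul_of_nonneg {X : Ω → ℝ} (hX : Measurable X)
    (hnonneg : ∀ᵐ ω ∂μ, 0 ≤ X ω) {s : ℝ} (hs : 0 ≤ s) : Integrable (fun ω => exp (-s * X ω)) μ := by
  refine (integrable_const 1).mono' (by fun_prop) ?_
  filter_upwards [hnonneg] with ω hω
  rw [norm_of_nonneg (exp_nonneg _), exp_le_one_iff]
  exact mul_nonpos_of_nonpos_of_nonneg (neg_nonpos.2 hs) hω

lemma mgf_neg_le_exp_neg_mul_measureReal {X : Ω → ℝ} (hX : Measurable X)
    (hnonneg : ∀ᵐ ω ∂μ, 0 ≤ X ω) {s : ℝ} (hs : 0 ≤ s) (c : ℝ) :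
    mgf X μ (-s) ≤ exp (-((1 - exp (-(s * c))) * μ.real {ω | c ≤ X ω})) := by
  have hint := integrable_exp_neg_mul_of_nonneg hX hnonneg hs
  have hset : MeasurableSet {ω | c ≤ X ω} := measurableSet_le measurable_const hX
  have hpt : {ω | c ≤ X ω}.indicator (fun _ => 1 - exp (-(s * c))) ≤ᵐ[μ]
      fun ω => 1 - exp (-s * X ω) := by
    filter_upwards [hnonneg] with ω hω
    by_cases h : c ≤ X ω
    · rw [indicator_of_mem (show ω ∈ {ω | c ≤ X ω} from h)]
      gcongr
      nlinarith
    · rw [indicator_of_notMem (show ω ∉ {ω | c ≤ X ω} from h)]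
      linarith [exp_le_one_iff.2 (mul_nonpos_of_nonpos_of_nonneg (neg_nonpos.2 hs) hω)]
  have hmarkov : ∫ ω, {ω | c ≤ X ω}.indicator (fun _ => 1 - exp (-(s * c))) ω ∂μ ≤
      ∫ ω, (1 - exp (-s * X ω)) ∂μ :=
    integral_mono_ae ((integrable_const _).indicator hset) ((integrable_const 1).sub hint) hpt
  rw [integral_indicator_const _ hset, integral_sub (integrable_const 1) hint, integral_const,
    probReal_univ, one_smul, smul_eq_mul] at hmarkov
  have hmgf : mgf X μ (-s) = ∫ ω, exp (-s * X ω) ∂μ := rfl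
  linarith [one_sub_le_exp_neg ((1 - exp (-(s * c))) * μ.real {ω | c ≤ X ω})]

lemma measureReal_sum_le_le_exp {ι : Type*} [Fintype ι] {X : ι → Ω → ℝ}
    (hX : ∀ i, Measurable (X i)) (hindep : iIndepFun X μ) (hnonneg : ∀ i, ∀ᵐ ω ∂μ, 0 ≤ X i ω)
    {s δ : ℝ} (hs : 0 ≤ s) (hmgf : ∀ i, mgf (X i) μ (-s) ≤ exp (-δ)) (a : ℝ) :
    μ.real {ω | ∑ i, X i ω ≤ a} ≤ exp (s * a - Fintype.card ι * δ) := by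
  have hsum_nonneg : ∀ᵐ ω ∂μ, 0 ≤ ∑ i, X i ω := by
    filter_upwards [ae_all_iff.2 hnonneg] with ω hω
    exact Finset.sum_nonneg fun i _ => hω i
  have hchernoff := measure_le_le_exp_mul_mgf a (neg_nonpos.2 hs)
    (integrable_exp_neg_mul_of_nonneg (Finset.measurable_sum _ fun i _ => hX i) hsum_nonneg hs)
  calc μ.real {ω | ∑ i, X i ω ≤ a} ≤ exp (s * a) * mgf (fun ω => ∑ i, X i ω) μ (-s) := by
        simpa only [neg_neg] using hchernoff
    _ = exp (s * a) * ∏ i, mgf (X i) μ (-s) := by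
        rw [← hindep.mgf_sum hX]; simp only [Finset.sum_fn]
    _ ≤ exp (s * a) * ∏ _i : ι, exp (-δ) := by
        gcongr with i
        · exact fun i _ => mgf_nonneg
        · exact hmgf i
    _ = exp (s * a - Fintype.card ι * δ) := by
        rw [Finset.prod_const, ← exp_nat_mul, ← exp_add, Finset.card_univ]
        ring_nf

end Chernoff

noncomputable def bfryWeight (α u : ℝ) : ℝ := u ^ (-α - 1) * (1 - exp (-u))

section BFRY

variable {α C u : ℝ}

lemma bfryWeight_nonneg (hu : 0 ≤ u) : 0 ≤ bfryWeight α u :=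
  mul_nonneg (rpow_nonneg hu _) (sub_nonneg.2 (exp_le_one_iff.2 (neg_nonpos.2 hu)))

lemma bfryWeight_le_rpow_neg (hu : 0 < u) : bfryWeight α u ≤ u ^ (-α) := by
  have h : 1 - exp (-u) ≤ u := by linarith [add_one_le_exp (-u)]
  calc bfryWeight α u ≤ u ^ (-α - 1) * u := by
        unfold bfryWeight; gcongr
    _ = u ^ (-α) := by rw [← rpow_add_one hu.ne']; ring_nf

lemma bfryWeight_le_rpow_neg_sub_one (hu : 0 ≤ u) : bfryWeight α u ≤ u ^ (-α - 1) := by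
  unfold bfryWeight
  exact mul_le_of_le_one_right (rpow_nonneg hu _) (by linarith [exp_pos (-u)])

lemma integrableOn_bfryWeight (hα : α < 1) (C : ℝ) : IntegrableOn (bfryWeight α) (Ioc 0 C) := by
  have hdom : IntegrableOn (fun u : ℝ => u ^ (-α)) (Ioc 0 C) :=
    ((intervalIntegral.intervalIntegrable_rpow' (by linarith)).def'.mono_set Ioc_subset_uIoc)
  refine hdom.mono' (by unfold bfryWeight; fun_prop) ?_
  filter_upwards [ae_restrict_mem measurableSet_Ioc] with u hu
  rw [norm_of_nonneg (bfryWeight_nonneg hu.1.le)]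
  exact bfryWeight_le_rpow_neg hu.1

lemma integral_bfryWeight_le (hα0 : 0 < α) (hα1 : α < 1) (hC : 1 ≤ C) :
    ∫ u in Ioc 0 C, bfryWeight α u ≤ (1 - α)⁻¹ + α⁻¹ := by
  have hint : ∀ a b, 0 ≤ a → a ≤ b → b ≤ C → IntervalIntegrable (bfryWeight α) volume a b :=
    fun a b ha hab hb => (intervalIntegrable_iff_integrableOn_Ioc_of_le hab).2
      ((integrableOn_bfryWeight hα1 C).mono_set (Ioc_subset_Ioc ha hb))
  have h01 : ∫ u in (0)..1, bfryWeight α u ≤ (1 - α)⁻¹ := by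
    calc ∫ u in (0)..1, bfryWeight α u ≤ ∫ u in (0)..1, u ^ (-α) :=
          intervalIntegral.integral_mono_on_of_le_Ioo zero_le_one (hint 0 1 le_rfl zero_le_one hC)
            (intervalIntegral.intervalIntegrable_rpow' (by linarith))
            fun u hu => bfryWeight_le_rpow_neg hu.1
      _ = (1 - α)⁻¹ := by
          rw [integral_rpow (Or.inl (by linarith)), one_rpow,
            zero_rpow (by linarith), sub_zero, one_div, neg_add_eq_sub]
  have h1C : ∫ u in (1)..C, bfryWeight α u ≤ α⁻¹ := by
    have h0 : (0 : ℝ) ∉ uIcc 1 C := by rw [uIcc_of_le hC]; exact fun h => by linarith [h.1]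
    calc ∫ u in (1)..C, bfryWeight α u ≤ ∫ u in (1)..C, u ^ (-α - 1) :=
          intervalIntegral.integral_mono_on_of_le_Ioo hC (hint 1 C zero_le_one hC le_rfl)
            (intervalIntegral.intervalIntegrable_rpow (Or.inr h0))
            fun u hu => bfryWeight_le_rpow_neg_sub_one (by linarith [hu.1])
      _ = (1 - C ^ (-α)) / α := by
          rw [integral_rpow (Or.inr ⟨by linarith, h0⟩), one_rpow, sub_add_cancel]
          field_simp
          ring
      _ ≤ α⁻¹ := by
          rw [div_le_iff₀ hα0, inv_mul_cancel₀ hα0.ne']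
          linarith [rpow_nonneg (zero_le_one.trans hC) (-α)]
  rw [← intervalIntegral.integral_of_le (zero_le_one.trans hC),
    ← intervalIntegral.integral_add_adjacent_intervals (hint 0 1 le_rfl zero_le_one hC)
      (hint 1 C zero_le_one hC le_rfl)]
  exact add_le_add h01 h1C

lemma le_integral_bfryWeight_Icc (hα : -1 ≤ α) (hC : 2 ≤ C) :
    (1 - exp (-1)) / 2 * C ^ (-α) ≤ ∫ u in Icc (C / 2) C, bfryWeight α u := by
  have hC0 : 0 < C := by linarith
  have hcont : ContinuousOn (bfryWeight α) (Icc (C / 2) C) :=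
    (continuousOn_id.rpow_const fun u hu => Or.inl (by linarith [hu.1] : (0 : ℝ) < u).ne').mul
      (continuousOn_const.sub (continuous_exp.comp continuous_neg).continuousOn)
  have hpt : ∀ u ∈ Icc (C / 2) C, C ^ (-α - 1) * (1 - exp (-1)) ≤ bfryWeight α u := by
    intro u hu
    have hu1 : 1 ≤ u := by linarith [hu.1]
    exact mul_le_mul (rpow_le_rpow_of_nonpos (by linarith) hu.2 (by linarith))
      (by gcongr) (by linarith [exp_le_one_iff.2 (show (-1 : ℝ) ≤ 0 by norm_num)])
      (rpow_nonneg (by linarith) _)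
  have h := setIntegral_ge_of_const_le measurableSet_Icc (measure_Icc_lt_top (μ := volume)).ne hpt
    hcont.integrableOn_Icc
  rw [volume_real_Icc, max_eq_left (by linarith), smul_eq_mul] at h
  refine le_of_eq_of_le ?_ h
  rw [show -α - 1 = -α + -1 by ring, rpow_add hC0, rpow_neg_one]
  field_simp
  ring

lemma truncBFRY_eq_withDensity (α C : ℝ) :
    truncBFRY α C = volume.withDensity fun u => ENNReal.ofReal ((Ioc 0 C).indicator
      (fun u => (∫ x in Ioc 0 C, bfryWeight α x)⁻¹ * bfryWeight α u) u) := by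
  simp only [truncBFRY, bfryWeight, mul_assoc]

lemma ae_mem_Ioc_truncBFRY : ∀ᵐ u ∂truncBFRY α C, u ∈ Ioc 0 C := by
  change truncBFRY α C (Ioc 0 C)ᶜ = 0
  rw [truncBFRY_eq_withDensity, withDensity_apply _ measurableSet_Ioc.compl,
    setLIntegral_congr_fun measurableSet_Ioc.compl fun u hu => by
      rw [indicator_of_notMem hu, ENNReal.ofReal_zero], lintegral_zero]

lemma truncBFRY_apply_of_subset (hα : α < 1) {A : Set ℝ} (hA : MeasurableSet A)
    (hAC : A ⊆ Ioc 0 C) :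
    truncBFRY α C A =
      ENNReal.ofReal ((∫ u in Ioc 0 C, bfryWeight α u)⁻¹ * ∫ u in A, bfryWeight α u) := by
  rw [truncBFRY_eq_withDensity, withDensity_apply _ hA,
    setLIntegral_congr_fun hA fun u hu => by rw [indicator_of_mem (hAC hu)],
    ← integral_const_mul, ofReal_integral_eq_lintegral_ofReal]
  · exact ((integrableOn_bfryWeight hα C).mono_set hAC).const_mul _
  · filter_upwards [ae_restrict_mem hA] with u hu
    exact mul_nonneg (inv_nonneg.2 (setIntegral_nonneg measurableSet_Ioc
      fun x hx => bfryWeight_nonneg hx.1.le)) (bfryWeight_nonneg (hAC hu).1.le)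

lemma exists_pos_forall_le_truncBFRY_Icc (hα0 : 0 < α) (hα1 : α < 1) :
    ∃ κ > 0, ∀ C, 2 ≤ C → κ * C ^ (-α) ≤ (truncBFRY α C (Icc (C / 2) C)).toReal := by
  have hB : 0 < (1 - α)⁻¹ + α⁻¹ := by
    have := inv_pos.2 (sub_pos.2 hα1); have := inv_pos.2 hα0; linarith
  have he : 0 < 1 - exp (-1) := sub_pos.2 (exp_lt_one_iff.2 (by norm_num))
  refine ⟨(1 - exp (-1)) / 2 / ((1 - α)⁻¹ + α⁻¹), by positivity, fun C hC => ?_⟩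
  have hsub : Icc (C / 2) C ⊆ Ioc 0 C := fun u hu => ⟨by linarith [hu.1], hu.2⟩
  set Z := ∫ u in Ioc 0 C, bfryWeight α u
  have hlow := le_integral_bfryWeight_Icc (by linarith) hC (α := α)
  have hpos : 0 < ∫ u in Icc (C / 2) C, bfryWeight α u :=
    lt_of_lt_of_le (by have := rpow_pos_of_pos (by linarith : (0:ℝ) < C) (-α); positivity) hlow
  have hZ : ∫ u in Icc (C / 2) C, bfryWeight α u ≤ Z :=
    setIntegral_mono_set (integrableOn_bfryWeight hα1 C)
      ((ae_restrict_mem measurableSet_Ioc).mono fun u hu => bfryWeight_nonneg hu.1.le)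
      hsub.eventuallyLE
  have hZB : Z ≤ (1 - α)⁻¹ + α⁻¹ := integral_bfryWeight_le hα0 hα1 (by linarith)
  rw [truncBFRY_apply_of_subset hα1 measurableSet_Icc hsub, ENNReal.toReal_ofReal
    (mul_nonneg (inv_nonneg.2 (hpos.le.trans hZ)) hpos.le)]
  calc (1 - exp (-1)) / 2 / ((1 - α)⁻¹ + α⁻¹) * C ^ (-α)
      = ((1 - α)⁻¹ + α⁻¹)⁻¹ * ((1 - exp (-1)) / 2 * C ^ (-α)) := by ring
    _ ≤ Z⁻¹ * ∫ u in Icc (C / 2) C, bfryWeight α u :=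
      mul_le_mul (inv_anti₀ (hpos.trans_le hZ) hZB) hlow (by positivity)
        (inv_nonneg.2 (hpos.le.trans hZ))

end BFRY

lemma tendsto_natCast_sub_one_mul_rpow_neg_atTop {α : ℝ} (hα : 0 < α) {C : ℕ → ℝ}
    (hC : Tendsto C atTop atTop) (hCn : Tendsto (fun n => C n ^ α / (n : ℝ)) atTop (nhds 0)) :
    Tendsto (fun n : ℕ => ((n - 1 : ℕ) : ℝ) * C n ^ (-α)) atTop atTop := by
  have hpos : ∀ᶠ n : ℕ in atTop, C n ^ α / (n : ℝ) ∈ Set.Ioi 0 := by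
    filter_upwards [hC.eventually_gt_atTop 0, eventually_gt_atTop 0] with n hCn hn
    exact div_pos (rpow_pos_of_pos hCn α) (Nat.cast_pos.2 hn)
  have hmain : Tendsto (fun n : ℕ => (n : ℝ) * C n ^ (-α)) atTop atTop := by
    refine (tendsto_nhdsWithin_iff.2 ⟨hCn, hpos⟩).inv_tendsto_nhdsGT_zero.congr' ?_
    filter_upwards [hC.eventually_gt_atTop 0] with n hCn
    rw [Pi.inv_apply, inv_div, rpow_neg hCn.le, div_eq_mul_inv]
  refine (hmain.atTop_add ((tendsto_rpow_neg_atTop hα).comp hC).neg).congr' ?_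
  filter_upwards [eventually_ge_atTop 1] with n hn
  simp only [Function.comp_apply, Nat.cast_sub hn, Nat.cast_one]
  ring

section Tail

variable {Ω : Type*} [MeasurableSpace Ω] {μ : Measure Ω} [IsProbabilityMeasure μ]
  {ι : Type*} [Fintype ι] {X : ι → Ω → ℝ} {α C κ w t ε : ℝ}

lemma measureReal_le_abs_Q₁_sub_one_le (hX : ∀ i, Measurable (X i)) (hindep : iIndepFun X μ)
    (hlaw : ∀ i, μ.map (X i) = truncBFRY α C) (hC : 2 ≤ C)
    (hκ : κ * C ^ (-α) ≤ (truncBFRY α C (Icc (C / 2) C)).toReal)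
    (hw : 0 < w) (ht : 0 ≤ t) (hε : 0 < ε) :
    μ.real {ω | ε ≤ |Q₁ w t (fun i => X i ω) - 1|} ≤
      exp (w * (1 + t) / ε - Fintype.card ι * ((1 - exp (-2⁻¹)) * (κ * C ^ (-α)))) := by
  have hC0 : 0 < C := by linarith
  have hmem : ∀ i, ∀ᵐ ω ∂μ, X i ω ∈ Ioc 0 C := fun i =>
    (ae_map_iff (hX i).aemeasurable measurableSet_Ioc).1 (hlaw i ▸ ae_mem_Ioc_truncBFRY)
  have hnonneg : ∀ i, ∀ᵐ ω ∂μ, 0 ≤ X i ω := fun i => (hmem i).mono fun ω h => h.1.le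
  have hmgf : ∀ i, mgf (X i) μ (-C⁻¹) ≤ exp (-((1 - exp (-2⁻¹)) * (κ * C ^ (-α)))) := by
    intro i
    refine (mgf_neg_le_exp_neg_mul_measureReal (hX i) (hnonneg i) (inv_nonneg.2 hC0.le)
      (C / 2)).trans (exp_le_exp.2 (neg_le_neg ?_))
    rw [show C⁻¹ * (C / 2) = 2⁻¹ by field_simp]
    refine mul_le_mul_of_nonneg_left ?_ (sub_nonneg.2 (exp_le_one_iff.2 (by norm_num)))
    calc κ * C ^ (-α) ≤ (truncBFRY α C (Icc (C / 2) C)).toReal := hκ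
      _ = μ.real (X i ⁻¹' Icc (C / 2) C) := by
        rw [measureReal_def, ← Measure.map_apply (hX i) measurableSet_Icc, hlaw i]
      _ ≤ μ.real {ω | C / 2 ≤ X i ω} := measureReal_mono fun ω h => h.1
  have hsub : {ω | ε ≤ |Q₁ w t (fun i => X i ω) - 1|} ≤ᵐ[μ]
      {ω | ∑ i, X i ω ≤ w * (1 + t * C) / ε} := by
    filter_upwards [ae_all_iff.2 hmem] with ω hω h
    exact sum_le_of_le_abs_Q₁_sub_one hw ht hC0.le (fun i => Ioc_subset_Icc_self (hω i)) hε h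
  calc μ.real {ω | ε ≤ |Q₁ w t (fun i => X i ω) - 1|}
      ≤ μ.real {ω | ∑ i, X i ω ≤ w * (1 + t * C) / ε} :=
        ENNReal.toReal_mono (measure_ne_top _ _) (measure_mono_ae hsub)
    _ ≤ exp (C⁻¹ * (w * (1 + t * C) / ε) -
          Fintype.card ι * ((1 - exp (-2⁻¹)) * (κ * C ^ (-α)))) :=
        measureReal_sum_le_le_exp hX hindep hnonneg (inv_nonneg.2 hC0.le) hmgf _
    _ ≤ exp (w * (1 + t) / ε - Fintype.card ι * ((1 - exp (-2⁻¹)) * (κ * C ^ (-α)))) := by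
        rw [show C⁻¹ * (w * (1 + t * C) / ε) = w * (C⁻¹ + t) / ε by field_simp]
        gcongr
        exact inv_le_one_of_one_le₀ (by linarith)

end Tail

theorem Q_one_tendsto_one_in_probability_general (α : ℝ) (hα0 : 0 < α) (hα1 : α < 1)
    (C : ℕ → ℝ)
    (hC : Tendsto C atTop atTop)
    (hCn : Tendsto (fun n => C n ^ α / (n : ℝ)) atTop (nhds 0))
    {Ω : Type*} [MeasureSpace Ω] [IsProbabilityMeasure (volume : Measure Ω)]
    (W : (n : ℕ) → Fin (n - 1) → Ω → ℝ)
    (hmeas : ∀ n i, Measurable (W n i))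
    (hindep : ∀ n, iIndepFun (W n) volume)
    (hlaw : ∀ n i, Measure.map (W n i) volume = truncBFRY α (C n))
    (w : ℝ) (hw : 0 < w) (t : ℝ) (ht : t ∈ Icc (0:ℝ) 1) :
    ∀ ε > 0,
      Tendsto (fun n : ℕ => (volume : Measure Ω)
          {ω | ε ≤ |(∑ i : Fin (n - 1),
              W n i ω / ((∑ j : Fin (n - 1), W n j ω) + w + t * w * W n i ω)) - 1|})
        atTop (nhds 0) := by
  intro ε hε
  obtain ⟨κ, hκ, hmass⟩ := exists_pos_forall_le_truncBFRY_Icc hα0 hα1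
  set c := (1 - exp (-2⁻¹)) * κ
  have hc : 0 < c := mul_pos (sub_pos.2 (exp_lt_one_iff.2 (by norm_num))) hκ
  have hbound : ∀ᶠ n : ℕ in atTop, (volume : Measure Ω).real {ω | ε ≤ |Q₁ w t (W n · ω) - 1|} ≤
      exp (w * (1 + t) / ε - c * (((n - 1 : ℕ) : ℝ) * C n ^ (-α))) := by
    filter_upwards [hC.eventually_ge_atTop 2] with n hn
    convert measureReal_le_abs_Q₁_sub_one_le (hmeas n) (hindep n) (hlaw n) hn (hmass _ hn)
      hw ht.1 hε using 2
    rw [Fintype.card_fin]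
    ring
  have hlim : Tendsto (fun n : ℕ => exp (w * (1 + t) / ε - c * (((n - 1 : ℕ) : ℝ) * C n ^ (-α))))
      atTop (nhds 0) := by
    simpa only [sub_eq_add_neg, Function.comp_def] using
      tendsto_exp_atBot.comp <| tendsto_atBot_add_const_left _ _ <| tendsto_neg_atTop_atBot.comp <|
        (tendsto_natCast_sub_one_mul_rpow_neg_atTop hα0 hC hCn).const_mul_atTop hc
  rw [← ENNReal.tendsto_toReal_iff (fun _ => measure_ne_top _ _) ENNReal.zero_ne_top,
    ENNReal.toReal_zero]
  exact tendsto_of_tendsto_of_tendsto_of_le_of_le' tendsto_const_nhds hlim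
    (Eventually.of_forall fun _ => measureReal_nonneg) hbound

/-- Under the truncated BFRY setup, for fixed `w > 0` and `t ∈ [0,1]`,
`Q_{1,n}(t;w) = ∑ᵢ W_{n,i}/(L_n + w + t·w·W_{n,i})` converges to `1` in
probability as `n → ∞`. -/
theorem Q_one_tendsto_one_in_probability (α : ℝ) (hα0 : 0 < α) (hα1 : α < 1)
    (C : ℕ → ℝ) (hCpos : ∀ n, 0 < C n)
    (hC : Tendsto C atTop atTop)
    (hCn : Tendsto (fun n => C n ^ α / (n : ℝ)) atTop (nhds 0))
    {Ω : Type*} [MeasureSpace Ω] [IsProbabilityMeasure (volume : Measure Ω)]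
    (W : (n : ℕ) → Fin (n - 1) → Ω → ℝ)
    (hmeas : ∀ n i, Measurable (W n i))
    (hindep : ∀ n, iIndepFun (W n) volume)
    (hlaw : ∀ n i, Measure.map (W n i) volume = truncBFRY α (C n))
    (w : ℝ) (hw : 0 < w) (t : ℝ) (ht : t ∈ Icc (0:ℝ) 1) :
    ∀ ε > 0,
      Tendsto (fun n : ℕ => (volume : Measure Ω)
          {ω | ε ≤ |(∑ i : Fin (n - 1),
              W n i ω / ((∑ j : Fin (n - 1), W n j ω) + w + t * w * W n i ω)) - 1|})
        atTop (nhds 0) :=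
  Q_one_tendsto_one_in_probability_general α hα0 hα1 C hC hCn W hmeas hindep hlaw w hw t ht
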